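/- Let 1/2 < γ < 1. Define h_γ(t) = (sin(γπ)/π) · (γ/(1−γ)) · t^γ / [(1−t)^{2γ} + t^{2γ} − 2 t^γ (1−t)^γ cos(γπ)] for 0 < t < 1, and H_γ(x) = ∫₀ˣ (x−t)^{γ−1} h_γ′(t) dt for 0 < x < 1. Then the derivative H_γ′ satisfies the asymptotic H_γ′(x) / [ (sin(γπ)/π) · (Γ(γ+1)²/Γ(2γ)) · ((2γ−1)/(1−γ)) · x^{2γ−2} ] → 1 as x → 0+. -/

import Mathlib

open MeasureTheory Real Set Filter

/-- The function `h_γ` from Yano--Yano. -/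
noncomputable def hDens (γ t : ℝ) : ℝ :=
  (Real.sin (γ * Real.pi) / Real.pi) * (γ / (1 - γ)) * t ^ γ /
    ((1 - t) ^ (2 * γ) + t ^ (2 * γ)
      - 2 * t ^ γ * (1 - t) ^ γ * Real.cos (γ * Real.pi))

/-- The distribution function `H_γ`. -/
noncomputable def HDist (γ x : ℝ) : ℝ :=
  ∫ t in (0:ℝ)..x, (x - t) ^ (γ - 1) * deriv (hDens γ) t

namespace YY

noncomputable def cc (γ : ℝ) : ℝ := Real.sin (γ * Real.pi) / Real.pi * (γ / (1 - γ))

noncomputable def Dd (γ t : ℝ) : ℝ :=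
  (1 - t) ^ (2 * γ) + t ^ (2 * γ) - 2 * t ^ γ * (1 - t) ^ γ * Real.cos (γ * Real.pi)

noncomputable def Dd1 (γ t : ℝ) : ℝ :=
  -(2 * γ) * (1 - t) ^ (2 * γ - 1) + (2 * γ) * t ^ (2 * γ - 1)
    - 2 * Real.cos (γ * Real.pi) *
      (γ * t ^ (γ - 1) * (1 - t) ^ γ - γ * t ^ γ * (1 - t) ^ (γ - 1))

noncomputable def Dd2 (γ t : ℝ) : ℝ :=
  (2 * γ) * (2 * γ - 1) * (1 - t) ^ (2 * γ - 2) + (2 * γ) * (2 * γ - 1) * t ^ (2 * γ - 2)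
    - 2 * Real.cos (γ * Real.pi) *
      (γ * (γ - 1) * t ^ (γ - 2) * (1 - t) ^ γ - 2 * γ ^ 2 * t ^ (γ - 1) * (1 - t) ^ (γ - 1)
        + γ * (γ - 1) * t ^ γ * (1 - t) ^ (γ - 2))

noncomputable def hd1 (γ t : ℝ) : ℝ :=
  (cc γ * (γ * t ^ (γ - 1)) * Dd γ t - cc γ * t ^ γ * Dd1 γ t) / (Dd γ t) ^ 2

noncomputable def rr (γ t : ℝ) : ℝ := hd1 γ t - cc γ * γ * t ^ (γ - 1)

noncomputable def rr1 (γ t : ℝ) : ℝ :=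
  (Dd γ t * (cc γ * γ * (γ - 1) * t ^ (γ - 2) * Dd γ t * (1 - Dd γ t) - cc γ * t ^ γ * Dd2 γ t)
    - 2 * Dd1 γ t * (cc γ * (γ * t ^ (γ - 1)) * Dd γ t - cc γ * t ^ γ * Dd1 γ t)) / (Dd γ t) ^ 3

section Basic

variable {γ t : ℝ} (hγ0 : 1 / 2 < γ) (hγ1 : γ < 1)

lemma hγpos (hγ0 : 1 / 2 < γ) : 0 < γ := by linarith

lemma sin_pos' (hγ0 : 1 / 2 < γ) (hγ1 : γ < 1) : 0 < Real.sin (γ * Real.pi) := by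
  apply Real.sin_pos_of_pos_of_lt_pi
  · have := Real.pi_pos; nlinarith
  · have := Real.pi_pos; nlinarith

lemma cc_pos (hγ0 : 1 / 2 < γ) (hγ1 : γ < 1) : 0 < cc γ := by
  have h1 := sin_pos' hγ0 hγ1
  have h2 := Real.pi_pos
  have h3 : 0 < γ / (1 - γ) := div_pos (by linarith) (by linarith)
  exact mul_pos (div_pos h1 h2) h3

lemma hDens_eq (γ : ℝ) : hDens γ = fun t => cc γ * t ^ γ / Dd γ t := rfl

lemma Dd_pos (hγ0 : 1 / 2 < γ) (hγ1 : γ < 1) (ht : t ∈ Ioo (0:ℝ) 1) : 0 < Dd γ t := by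
  obtain ⟨ht0, ht1⟩ := ht
  have h1t : (0:ℝ) < 1 - t := by linarith
  have hu : (0:ℝ) < t ^ γ := Real.rpow_pos_of_pos ht0 γ
  have e1 : t ^ (2 * γ) = t ^ γ * t ^ γ := by
    rw [two_mul, Real.rpow_add ht0]
  have e2 : (1 - t) ^ (2 * γ) = (1 - t) ^ γ * (1 - t) ^ γ := by
    rw [two_mul, Real.rpow_add h1t]
  have hsin := sin_pos' hγ0 hγ1
  have key : Dd γ t = ((1 - t) ^ γ - t ^ γ * Real.cos (γ * Real.pi)) ^ 2
      + (t ^ γ * Real.sin (γ * Real.pi)) ^ 2 := by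
    have pyth := Real.sin_sq_add_cos_sq (γ * Real.pi)
    unfold Dd; rw [e1, e2]; nlinarith [pyth]
  rw [key]
  have : 0 < (t ^ γ * Real.sin (γ * Real.pi)) ^ 2 := by positivity
  positivity

lemma hasDerivAt_sub_one (t : ℝ) : HasDerivAt (fun s : ℝ => 1 - s) (-1) t := by
  simpa using (hasDerivAt_id' t).const_sub (1:ℝ)

lemma hd_rpow (p : ℝ) (ht0 : 0 < t) : HasDerivAt (fun s : ℝ => s ^ p) (p * t ^ (p - 1)) t :=
  Real.hasDerivAt_rpow_const (Or.inl ht0.ne')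

lemma hd_rpow' (p : ℝ) (ht1 : t < 1) :
    HasDerivAt (fun s : ℝ => (1 - s) ^ p) (-(p * (1 - t) ^ (p - 1))) t := by
  have h1t : (0:ℝ) < 1 - t := by linarith
  have := (Real.hasDerivAt_rpow_const (x := 1 - t) (p := p) (Or.inl h1t.ne')).comp t
    (hasDerivAt_sub_one t)
  have h2 : HasDerivAt (fun s : ℝ => (1 - s) ^ p) (p * (1 - t) ^ (p - 1) * -1) t := this
  simpa using h2

lemma hasDerivAt_Dd (ht : t ∈ Ioo (0:ℝ) 1) : HasDerivAt (Dd γ) (Dd1 γ t) t := by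
  obtain ⟨ht0, ht1⟩ := ht
  have h1 := hd_rpow' (t := t) (2 * γ) ht1
  have h2 := hd_rpow (t := t) (2 * γ) ht0
  have h3 := hd_rpow (t := t) γ ht0
  have h4 := hd_rpow' (t := t) γ ht1
  have h5 : HasDerivAt (fun s : ℝ => 2 * s ^ γ * (1 - s) ^ γ * Real.cos (γ * Real.pi))
      ((2 * (γ * t ^ (γ - 1)) * (1 - t) ^ γ
        + 2 * t ^ γ * (-(γ * (1 - t) ^ (γ - 1)))) * Real.cos (γ * Real.pi)) t := by
    exact (((h3.const_mul 2).mul h4)).mul_const _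
  have := (h1.add h2).sub h5
  refine this.congr_deriv ?_
  unfold Dd1; ring

lemma hasDerivAt_Dd1 (ht : t ∈ Ioo (0:ℝ) 1) : HasDerivAt (Dd1 γ) (Dd2 γ t) t := by
  obtain ⟨ht0, ht1⟩ := ht
  have h1 := (hd_rpow' (t := t) (2 * γ - 1) ht1).const_mul (-(2 * γ))
  have h2 := (hd_rpow (t := t) (2 * γ - 1) ht0).const_mul (2 * γ)
  have h3 : HasDerivAt
      (fun s : ℝ => γ * s ^ (γ - 1) * (1 - s) ^ γ - γ * s ^ γ * (1 - s) ^ (γ - 1))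
      ((γ * ((γ - 1) * t ^ (γ - 1 - 1)) * (1 - t) ^ γ
          + γ * t ^ (γ - 1) * (-(γ * (1 - t) ^ (γ - 1))))
        - (γ * (γ * t ^ (γ - 1)) * (1 - t) ^ (γ - 1)
          + γ * t ^ γ * (-((γ - 1) * (1 - t) ^ (γ - 1 - 1))))) t := by
    exact (((hd_rpow (γ - 1) ht0).const_mul γ).mul (hd_rpow' γ ht1)).sub
      (((hd_rpow γ ht0).const_mul γ).mul (hd_rpow' (γ - 1) ht1))
  have := (h1.add h2).sub (h3.const_mul (2 * Real.cos (γ * Real.pi)))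
  refine this.congr_deriv ?_
  unfold Dd2
  have e1 : γ - 1 - 1 = γ - 2 := by ring
  have e2 : 2 * γ - 1 - 1 = 2 * γ - 2 := by ring
  rw [e1, e2]; ring

include hγ0 hγ1 in
lemma hasDerivAt_hDens (ht : t ∈ Ioo (0:ℝ) 1) : HasDerivAt (hDens γ) (hd1 γ t) t := by
  have hD := Dd_pos hγ0 hγ1 ht
  have hnum : HasDerivAt (fun s : ℝ => cc γ * s ^ γ) (cc γ * (γ * t ^ (γ - 1))) t :=
    (hd_rpow γ ht.1).const_mul (cc γ)
  have := hnum.div (hasDerivAt_Dd ht) hD.ne'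
  rw [hDens_eq]
  exact this

include hγ0 hγ1 in
lemma deriv_hDens (ht : t ∈ Ioo (0:ℝ) 1) :
    deriv (hDens γ) t = cc γ * γ * t ^ (γ - 1) + rr γ t := by
  rw [(hasDerivAt_hDens hγ0 hγ1 ht).deriv]; unfold rr; ring

include hγ0 hγ1 in
lemma hasDerivAt_rr (ht : t ∈ Ioo (0:ℝ) 1) : HasDerivAt (rr γ) (rr1 γ t) t := by
  obtain ⟨ht0, ht1⟩ := ht
  have hD := Dd_pos hγ0 hγ1 ⟨ht0, ht1⟩
  have hnum : HasDerivAt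
      (fun s : ℝ => cc γ * (γ * s ^ (γ - 1)) * Dd γ s - cc γ * s ^ γ * Dd1 γ s)
      ((cc γ * (γ * ((γ - 1) * t ^ (γ - 1 - 1))) * Dd γ t
          + cc γ * (γ * t ^ (γ - 1)) * Dd1 γ t)
        - (cc γ * (γ * t ^ (γ - 1)) * Dd1 γ t + cc γ * t ^ γ * Dd2 γ t)) t := by
    refine HasDerivAt.sub ?_ ?_
    · exact (((hd_rpow (γ - 1) ht0).const_mul γ).const_mul (cc γ)).mul
        (hasDerivAt_Dd ⟨ht0, ht1⟩)
    · exact ((hd_rpow γ ht0).const_mul (cc γ)).mul (hasDerivAt_Dd1 ⟨ht0, ht1⟩)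
  have hden : HasDerivAt (fun s : ℝ => (Dd γ s) ^ 2) (2 * Dd γ t ^ 1 * Dd1 γ t) t := by
    exact ((hasDerivAt_Dd (γ := γ) ⟨ht0, ht1⟩).pow 2).congr_deriv (by norm_num)
  have hquot := hnum.div hden (by positivity)
  have hlin : HasDerivAt (fun s : ℝ => cc γ * γ * s ^ (γ - 1))
      (cc γ * γ * ((γ - 1) * t ^ (γ - 1 - 1))) t :=
    (hd_rpow (γ - 1) ht0).const_mul (cc γ * γ)
  have := hquot.sub hlin
  have heq : (fun s => (cc γ * (γ * s ^ (γ - 1)) * Dd γ s - cc γ * s ^ γ * Dd1 γ s) /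
      (Dd γ s) ^ 2 - cc γ * γ * s ^ (γ - 1)) = rr γ := by
    funext s; unfold rr hd1; ring
  rw [← heq]
  refine this.congr_deriv ?_
  unfold rr1
  have e1 : γ - 1 - 1 = γ - 2 := by ring
  rw [e1]
  field_simp
  ring

lemma mabs {x y c d : ℝ} (hx : |x| ≤ c) (hy : |y| ≤ d) : |x*y| ≤ c*d := by
  rw [abs_mul]
  exact mul_le_mul hx hy (abs_nonneg _) ((abs_nonneg x).trans hx)

lemma est1 (hγ0 : 1 / 2 < γ) (hγ1 : γ < 1) (ht : t ∈ Ioc (0:ℝ) (1/2)) :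
    |1 - Dd γ t| ≤ 6 * t ^ γ := by
  obtain ⟨ht0, ht2⟩ := ht
  have hγp : (0:ℝ) < γ := by linarith
  have hγa : |γ| ≤ 1 := by rw [abs_of_nonneg hγp.le]; linarith
  have h2γn : |(-(2*γ))| ≤ 2 := by rw [abs_neg, abs_of_nonneg (by linarith)]; linarith
  have h2γ : |(2*γ)| ≤ 2 := by rw [abs_of_nonneg (by linarith)]; linarith
  have h22 : |(2*γ)*(2*γ-1)| ≤ 2 := by
    rw [abs_of_nonneg (by nlinarith)]
    nlinarith [mul_nonneg (by linarith : (0:ℝ) ≤ 2*γ+1) (by linarith : (0:ℝ) ≤ 1-γ)]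
  have hγγ : |γ*(γ-1)| ≤ 1/2 := by
    rw [abs_of_nonpos (by nlinarith), neg_le]
    nlinarith [sq_nonneg (2*γ-1)]
  have h2γ2 : |2*γ^2| ≤ 2 := by
    rw [abs_of_nonneg (by positivity)]
    nlinarith [sq_nonneg (1-γ)]
  have hco : |Real.cos (γ * Real.pi)| ≤ 1 := Real.abs_cos_le_one _
  have h2co : |2 * Real.cos (γ * Real.pi)| ≤ 2 := by
    refine (mabs (le_of_eq (abs_of_nonneg (by norm_num : (0:ℝ) ≤ 2))) hco).trans ?_
    norm_num
  have h1t : (1:ℝ)/2 ≤ 1 - t := by linarith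
  have h1t0 : (0:ℝ) < 1 - t := by linarith
  have h1t1 : 1 - t ≤ 1 := by linarith
  have ha0 : 0 < t ^ γ := Real.rpow_pos_of_pos ht0 _
  have hb0 : 0 < t ^ (γ-1) := Real.rpow_pos_of_pos ht0 _
  have hc0 : 0 < t ^ (γ-2) := Real.rpow_pos_of_pos ht0 _
  have ht1 : t ≤ 1 := by linarith
  have ha1 : t ^ γ ≤ 1 := Real.rpow_le_one ht0.le ht1 hγp.le
  have hta : t ≤ t ^ γ := by
    nth_rewrite 1 [← Real.rpow_one t]
    exact Real.rpow_le_rpow_of_exponent_ge ht0 ht1 hγ1.le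
  have hb1 : 1 ≤ t ^ (γ-1) := by
    nth_rewrite 1 [← Real.rpow_zero t]
    exact Real.rpow_le_rpow_of_exponent_ge ht0 ht1 (by linarith)
  have hab : t ^ γ ≤ t ^ (γ-1) :=
    Real.rpow_le_rpow_of_exponent_ge ht0 ht1 (by linarith)
  have hbc : t ^ (γ-1) ≤ t ^ (γ-2) :=
    Real.rpow_le_rpow_of_exponent_ge ht0 ht1 (by linarith)
  have hac : t ^ γ ≤ t ^ (γ-2) := hab.trans hbc
  have h1c : 1 ≤ t ^ (γ-2) := hb1.trans hbc
  have haa1 : t ^ γ * t ^ γ ≤ t ^ γ := by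
    calc t ^ γ * t ^ γ ≤ 1 * t ^ γ := mul_le_mul_of_nonneg_right ha1 ha0.le
      _ = t ^ γ := one_mul _
  have hab1 : t ^ γ * t ^ (γ-1) ≤ t ^ (γ-1) := by
    calc t ^ γ * t ^ (γ-1) ≤ 1 * t ^ (γ-1) := mul_le_mul_of_nonneg_right ha1 hb0.le
      _ = t ^ (γ-1) := one_mul _
  have hac1 : t ^ γ * t ^ (γ-2) ≤ t ^ (γ-2) := by
    calc t ^ γ * t ^ (γ-2) ≤ 1 * t ^ (γ-2) := mul_le_mul_of_nonneg_right ha1 hc0.le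
      _ = t ^ (γ-2) := one_mul _
  have e2a : t ^ (2*γ) = t ^ γ * t ^ γ := by
    rw [two_mul, Real.rpow_add ht0]
  have e2b : t ^ (2*γ-1) = t ^ γ * t ^ (γ-1) := by
    rw [show 2*γ-1 = γ + (γ-1) by ring, Real.rpow_add ht0]
  have e2c : t ^ (2*γ-2) = t ^ γ * t ^ (γ-2) := by
    rw [show 2*γ-2 = γ + (γ-2) by ring, Real.rpow_add ht0]
  have e2d : t ^ (γ-1) * t ^ (γ-1) = t ^ γ * t ^ (γ-2) := by
    rw [← Real.rpow_add ht0, ← Real.rpow_add ht0]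
    congr 1
    ring
  have hv1 : |(1-t) ^ γ| ≤ 1 := by
    rw [abs_of_nonneg (Real.rpow_pos_of_pos h1t0 _).le]
    exact Real.rpow_le_one h1t0.le h1t1 hγp.le
  have hv3 : |(1-t) ^ (2*γ-1)| ≤ 1 := by
    rw [abs_of_nonneg (Real.rpow_pos_of_pos h1t0 _).le]
    exact Real.rpow_le_one h1t0.le h1t1 (by linarith)
  have hhalf : ∀ p : ℝ, p ≤ 0 → (1-t) ^ p ≤ (1/2:ℝ) ^ p := fun p hp =>
    Real.rpow_le_rpow_of_nonpos (by norm_num) h1t hp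
  have hw1 : |(1-t) ^ (γ-1)| ≤ 2 := by
    rw [abs_of_nonneg (Real.rpow_pos_of_pos h1t0 _).le]
    refine (hhalf _ (by linarith)).trans ?_
    calc ((1:ℝ)/2) ^ (γ-1) ≤ (1/2:ℝ) ^ (-1:ℝ) :=
          Real.rpow_le_rpow_of_exponent_ge (by norm_num) (by norm_num) (by linarith)
      _ = 2 := by rw [Real.rpow_neg_one]; norm_num
  have hw2 : |(1-t) ^ (γ-2)| ≤ 4 := by
    rw [abs_of_nonneg (Real.rpow_pos_of_pos h1t0 _).le]
    refine (hhalf _ (by linarith)).trans ?_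
    calc ((1:ℝ)/2) ^ (γ-2) ≤ (1/2:ℝ) ^ (-2:ℝ) :=
          Real.rpow_le_rpow_of_exponent_ge (by norm_num) (by norm_num) (by linarith)
      _ = 4 := by
          rw [show (-2:ℝ) = -(2:ℕ) by norm_num, Real.rpow_neg (by norm_num),
            Real.rpow_natCast]
          norm_num
  have hw3 : |(1-t) ^ (2*γ-2)| ≤ 2 := by
    rw [abs_of_nonneg (Real.rpow_pos_of_pos h1t0 _).le]
    refine (hhalf _ (by linarith)).trans ?_
    calc ((1:ℝ)/2) ^ (2*γ-2) ≤ (1/2:ℝ) ^ (-1:ℝ) :=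
          Real.rpow_le_rpow_of_exponent_ge (by norm_num) (by norm_num) (by linarith)
      _ = 2 := by rw [Real.rpow_neg_one]; norm_num
  have haa : |t ^ γ| ≤ t ^ γ := le_of_eq (abs_of_nonneg ha0.le)
  have hba : |t ^ (γ-1)| ≤ t ^ (γ-1) := le_of_eq (abs_of_nonneg hb0.le)
  have hca : |t ^ (γ-2)| ≤ t ^ (γ-2) := le_of_eq (abs_of_nonneg hc0.le)
  have hv2low : (1-t) ^ (2:ℝ) ≤ (1-t) ^ (2*γ) :=
    Real.rpow_le_rpow_of_exponent_ge h1t0 h1t1 (by linarith)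
  rw [Real.rpow_two] at hv2low
  have hv2up : (1-t) ^ (2*γ) ≤ 1 := Real.rpow_le_one h1t0.le h1t1 (by linarith)
  have hA : |1 - (1-t) ^ (2*γ)| ≤ 2*t := by
    rw [abs_of_nonneg (by linarith)]
    have hsq : (1-t)^2 = 1 - 2*t + t^2 := by ring
    have h0 := sq_nonneg t
    linarith
  have hB : |(-(t ^ (2*γ)))| ≤ t ^ γ := by
    rw [abs_neg, abs_of_nonneg (Real.rpow_pos_of_pos ht0 _).le, e2a]
    linarith
  have hC : |2 * t ^ γ * (1-t) ^ γ * Real.cos (γ * Real.pi)| ≤ 2 * t ^ γ := by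
    have h2a : |(2:ℝ) * t ^ γ| ≤ 2 * t ^ γ := le_of_eq (abs_of_nonneg (by positivity))
    refine (mabs (mabs h2a hv1) hco).trans ?_
    linarith
  have expand : 1 - Dd γ t
      = (1 - (1-t) ^ (2*γ)) + (-(t ^ (2*γ))) + 2 * t ^ γ * (1-t) ^ γ * Real.cos (γ * Real.pi) := by
    unfold Dd; ring
  rw [expand]
  refine (abs_add_three _ _ _).trans ?_
  linarith

lemma est2 (hγ0 : 1 / 2 < γ) (hγ1 : γ < 1) (ht : t ∈ Ioc (0:ℝ) (1/2)) :
    |Dd1 γ t| ≤ 12 * t ^ (γ-1) := by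
  obtain ⟨ht0, ht2⟩ := ht
  have hγp : (0:ℝ) < γ := by linarith
  have hγa : |γ| ≤ 1 := by rw [abs_of_nonneg hγp.le]; linarith
  have h2γn : |(-(2*γ))| ≤ 2 := by rw [abs_neg, abs_of_nonneg (by linarith)]; linarith
  have h2γ : |(2*γ)| ≤ 2 := by rw [abs_of_nonneg (by linarith)]; linarith
  have h22 : |(2*γ)*(2*γ-1)| ≤ 2 := by
    rw [abs_of_nonneg (by nlinarith)]
    nlinarith [mul_nonneg (by linarith : (0:ℝ) ≤ 2*γ+1) (by linarith : (0:ℝ) ≤ 1-γ)]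
  have hγγ : |γ*(γ-1)| ≤ 1/2 := by
    rw [abs_of_nonpos (by nlinarith), neg_le]
    nlinarith [sq_nonneg (2*γ-1)]
  have h2γ2 : |2*γ^2| ≤ 2 := by
    rw [abs_of_nonneg (by positivity)]
    nlinarith [sq_nonneg (1-γ)]
  have hco : |Real.cos (γ * Real.pi)| ≤ 1 := Real.abs_cos_le_one _
  have h2co : |2 * Real.cos (γ * Real.pi)| ≤ 2 := by
    refine (mabs (le_of_eq (abs_of_nonneg (by norm_num : (0:ℝ) ≤ 2))) hco).trans ?_
    norm_num
  have h1t : (1:ℝ)/2 ≤ 1 - t := by linarith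
  have h1t0 : (0:ℝ) < 1 - t := by linarith
  have h1t1 : 1 - t ≤ 1 := by linarith
  have ha0 : 0 < t ^ γ := Real.rpow_pos_of_pos ht0 _
  have hb0 : 0 < t ^ (γ-1) := Real.rpow_pos_of_pos ht0 _
  have hc0 : 0 < t ^ (γ-2) := Real.rpow_pos_of_pos ht0 _
  have ht1 : t ≤ 1 := by linarith
  have ha1 : t ^ γ ≤ 1 := Real.rpow_le_one ht0.le ht1 hγp.le
  have hta : t ≤ t ^ γ := by
    nth_rewrite 1 [← Real.rpow_one t]
    exact Real.rpow_le_rpow_of_exponent_ge ht0 ht1 hγ1.le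
  have hb1 : 1 ≤ t ^ (γ-1) := by
    nth_rewrite 1 [← Real.rpow_zero t]
    exact Real.rpow_le_rpow_of_exponent_ge ht0 ht1 (by linarith)
  have hab : t ^ γ ≤ t ^ (γ-1) :=
    Real.rpow_le_rpow_of_exponent_ge ht0 ht1 (by linarith)
  have hbc : t ^ (γ-1) ≤ t ^ (γ-2) :=
    Real.rpow_le_rpow_of_exponent_ge ht0 ht1 (by linarith)
  have hac : t ^ γ ≤ t ^ (γ-2) := hab.trans hbc
  have h1c : 1 ≤ t ^ (γ-2) := hb1.trans hbc
  have haa1 : t ^ γ * t ^ γ ≤ t ^ γ := by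
    calc t ^ γ * t ^ γ ≤ 1 * t ^ γ := mul_le_mul_of_nonneg_right ha1 ha0.le
      _ = t ^ γ := one_mul _
  have hab1 : t ^ γ * t ^ (γ-1) ≤ t ^ (γ-1) := by
    calc t ^ γ * t ^ (γ-1) ≤ 1 * t ^ (γ-1) := mul_le_mul_of_nonneg_right ha1 hb0.le
      _ = t ^ (γ-1) := one_mul _
  have hac1 : t ^ γ * t ^ (γ-2) ≤ t ^ (γ-2) := by
    calc t ^ γ * t ^ (γ-2) ≤ 1 * t ^ (γ-2) := mul_le_mul_of_nonneg_right ha1 hc0.le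
      _ = t ^ (γ-2) := one_mul _
  have e2a : t ^ (2*γ) = t ^ γ * t ^ γ := by
    rw [two_mul, Real.rpow_add ht0]
  have e2b : t ^ (2*γ-1) = t ^ γ * t ^ (γ-1) := by
    rw [show 2*γ-1 = γ + (γ-1) by ring, Real.rpow_add ht0]
  have e2c : t ^ (2*γ-2) = t ^ γ * t ^ (γ-2) := by
    rw [show 2*γ-2 = γ + (γ-2) by ring, Real.rpow_add ht0]
  have e2d : t ^ (γ-1) * t ^ (γ-1) = t ^ γ * t ^ (γ-2) := by
    rw [← Real.rpow_add ht0, ← Real.rpow_add ht0]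
    congr 1
    ring
  have hv1 : |(1-t) ^ γ| ≤ 1 := by
    rw [abs_of_nonneg (Real.rpow_pos_of_pos h1t0 _).le]
    exact Real.rpow_le_one h1t0.le h1t1 hγp.le
  have hv3 : |(1-t) ^ (2*γ-1)| ≤ 1 := by
    rw [abs_of_nonneg (Real.rpow_pos_of_pos h1t0 _).le]
    exact Real.rpow_le_one h1t0.le h1t1 (by linarith)
  have hhalf : ∀ p : ℝ, p ≤ 0 → (1-t) ^ p ≤ (1/2:ℝ) ^ p := fun p hp =>
    Real.rpow_le_rpow_of_nonpos (by norm_num) h1t hp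
  have hw1 : |(1-t) ^ (γ-1)| ≤ 2 := by
    rw [abs_of_nonneg (Real.rpow_pos_of_pos h1t0 _).le]
    refine (hhalf _ (by linarith)).trans ?_
    calc ((1:ℝ)/2) ^ (γ-1) ≤ (1/2:ℝ) ^ (-1:ℝ) :=
          Real.rpow_le_rpow_of_exponent_ge (by norm_num) (by norm_num) (by linarith)
      _ = 2 := by rw [Real.rpow_neg_one]; norm_num
  have hw2 : |(1-t) ^ (γ-2)| ≤ 4 := by
    rw [abs_of_nonneg (Real.rpow_pos_of_pos h1t0 _).le]
    refine (hhalf _ (by linarith)).trans ?_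
    calc ((1:ℝ)/2) ^ (γ-2) ≤ (1/2:ℝ) ^ (-2:ℝ) :=
          Real.rpow_le_rpow_of_exponent_ge (by norm_num) (by norm_num) (by linarith)
      _ = 4 := by
          rw [show (-2:ℝ) = -(2:ℕ) by norm_num, Real.rpow_neg (by norm_num),
            Real.rpow_natCast]
          norm_num
  have hw3 : |(1-t) ^ (2*γ-2)| ≤ 2 := by
    rw [abs_of_nonneg (Real.rpow_pos_of_pos h1t0 _).le]
    refine (hhalf _ (by linarith)).trans ?_
    calc ((1:ℝ)/2) ^ (2*γ-2) ≤ (1/2:ℝ) ^ (-1:ℝ) :=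
          Real.rpow_le_rpow_of_exponent_ge (by norm_num) (by norm_num) (by linarith)
      _ = 2 := by rw [Real.rpow_neg_one]; norm_num
  have haa : |t ^ γ| ≤ t ^ γ := le_of_eq (abs_of_nonneg ha0.le)
  have hba : |t ^ (γ-1)| ≤ t ^ (γ-1) := le_of_eq (abs_of_nonneg hb0.le)
  have hca : |t ^ (γ-2)| ≤ t ^ (γ-2) := le_of_eq (abs_of_nonneg hc0.le)
  have hT1 : |(-(2*γ)) * (1-t) ^ (2*γ-1)| ≤ 2 * t ^ (γ-1) := by
    refine (mabs h2γn hv3).trans ?_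
    linarith
  have hT2 : |(2*γ) * t ^ (2*γ-1)| ≤ 2 * t ^ (γ-1) := by
    have hx : |t ^ (2*γ-1)| ≤ t ^ (γ-1) := by
      rw [abs_of_nonneg (Real.rpow_pos_of_pos ht0 _).le, e2b]
      linarith
    refine (mabs h2γ hx).trans ?_
    linarith
  have hX : |γ * t ^ (γ-1) * (1-t) ^ γ| ≤ t ^ (γ-1) := by
    refine (mabs (mabs hγa hba) hv1).trans ?_
    linarith
  have hY : |γ * t ^ γ * (1-t) ^ (γ-1)| ≤ 2 * t ^ (γ-1) := by
    have haa' : |t ^ γ| ≤ t ^ (γ-1) := by rw [abs_of_nonneg ha0.le]; exact hab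
    refine (mabs (mabs hγa haa') hw1).trans ?_
    linarith
  have hXY : |γ * t ^ (γ-1) * (1-t) ^ γ - γ * t ^ γ * (1-t) ^ (γ-1)| ≤ 3 * t ^ (γ-1) :=
    (abs_sub _ _).trans (by linarith)
  have hT3 : |(-(2 * Real.cos (γ * Real.pi) *
      (γ * t ^ (γ-1) * (1-t) ^ γ - γ * t ^ γ * (1-t) ^ (γ-1))))| ≤ 6 * t ^ (γ-1) := by
    rw [abs_neg]
    refine (mabs h2co hXY).trans ?_
    linarith
  have expand : Dd1 γ t = (-(2*γ)) * (1-t) ^ (2*γ-1) + (2*γ) * t ^ (2*γ-1)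
      + (-(2 * Real.cos (γ * Real.pi) *
        (γ * t ^ (γ-1) * (1-t) ^ γ - γ * t ^ γ * (1-t) ^ (γ-1)))) := by
    unfold Dd1; ring
  rw [expand]
  refine (abs_add_three _ _ _).trans ?_
  linarith

lemma est3 (hγ0 : 1 / 2 < γ) (hγ1 : γ < 1) (ht : t ∈ Ioc (0:ℝ) (1/2)) :
    |Dd2 γ t| ≤ 30 * t ^ (γ-2) := by
  obtain ⟨ht0, ht2⟩ := ht
  have hγp : (0:ℝ) < γ := by linarith
  have hγa : |γ| ≤ 1 := by rw [abs_of_nonneg hγp.le]; linarith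
  have h2γn : |(-(2*γ))| ≤ 2 := by rw [abs_neg, abs_of_nonneg (by linarith)]; linarith
  have h2γ : |(2*γ)| ≤ 2 := by rw [abs_of_nonneg (by linarith)]; linarith
  have h22 : |(2*γ)*(2*γ-1)| ≤ 2 := by
    rw [abs_of_nonneg (by nlinarith)]
    nlinarith [mul_nonneg (by linarith : (0:ℝ) ≤ 2*γ+1) (by linarith : (0:ℝ) ≤ 1-γ)]
  have hγγ : |γ*(γ-1)| ≤ 1/2 := by
    rw [abs_of_nonpos (by nlinarith), neg_le]
    nlinarith [sq_nonneg (2*γ-1)]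
  have h2γ2 : |2*γ^2| ≤ 2 := by
    rw [abs_of_nonneg (by positivity)]
    nlinarith [sq_nonneg (1-γ)]
  have hco : |Real.cos (γ * Real.pi)| ≤ 1 := Real.abs_cos_le_one _
  have h2co : |2 * Real.cos (γ * Real.pi)| ≤ 2 := by
    refine (mabs (le_of_eq (abs_of_nonneg (by norm_num : (0:ℝ) ≤ 2))) hco).trans ?_
    norm_num
  have h1t : (1:ℝ)/2 ≤ 1 - t := by linarith
  have h1t0 : (0:ℝ) < 1 - t := by linarith
  have h1t1 : 1 - t ≤ 1 := by linarith
  have ha0 : 0 < t ^ γ := Real.rpow_pos_of_pos ht0 _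
  have hb0 : 0 < t ^ (γ-1) := Real.rpow_pos_of_pos ht0 _
  have hc0 : 0 < t ^ (γ-2) := Real.rpow_pos_of_pos ht0 _
  have ht1 : t ≤ 1 := by linarith
  have ha1 : t ^ γ ≤ 1 := Real.rpow_le_one ht0.le ht1 hγp.le
  have hta : t ≤ t ^ γ := by
    nth_rewrite 1 [← Real.rpow_one t]
    exact Real.rpow_le_rpow_of_exponent_ge ht0 ht1 hγ1.le
  have hb1 : 1 ≤ t ^ (γ-1) := by
    nth_rewrite 1 [← Real.rpow_zero t]
    exact Real.rpow_le_rpow_of_exponent_ge ht0 ht1 (by linarith)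
  have hab : t ^ γ ≤ t ^ (γ-1) :=
    Real.rpow_le_rpow_of_exponent_ge ht0 ht1 (by linarith)
  have hbc : t ^ (γ-1) ≤ t ^ (γ-2) :=
    Real.rpow_le_rpow_of_exponent_ge ht0 ht1 (by linarith)
  have hac : t ^ γ ≤ t ^ (γ-2) := hab.trans hbc
  have h1c : 1 ≤ t ^ (γ-2) := hb1.trans hbc
  have haa1 : t ^ γ * t ^ γ ≤ t ^ γ := by
    calc t ^ γ * t ^ γ ≤ 1 * t ^ γ := mul_le_mul_of_nonneg_right ha1 ha0.le
      _ = t ^ γ := one_mul _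
  have hab1 : t ^ γ * t ^ (γ-1) ≤ t ^ (γ-1) := by
    calc t ^ γ * t ^ (γ-1) ≤ 1 * t ^ (γ-1) := mul_le_mul_of_nonneg_right ha1 hb0.le
      _ = t ^ (γ-1) := one_mul _
  have hac1 : t ^ γ * t ^ (γ-2) ≤ t ^ (γ-2) := by
    calc t ^ γ * t ^ (γ-2) ≤ 1 * t ^ (γ-2) := mul_le_mul_of_nonneg_right ha1 hc0.le
      _ = t ^ (γ-2) := one_mul _
  have e2a : t ^ (2*γ) = t ^ γ * t ^ γ := by
    rw [two_mul, Real.rpow_add ht0]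
  have e2b : t ^ (2*γ-1) = t ^ γ * t ^ (γ-1) := by
    rw [show 2*γ-1 = γ + (γ-1) by ring, Real.rpow_add ht0]
  have e2c : t ^ (2*γ-2) = t ^ γ * t ^ (γ-2) := by
    rw [show 2*γ-2 = γ + (γ-2) by ring, Real.rpow_add ht0]
  have e2d : t ^ (γ-1) * t ^ (γ-1) = t ^ γ * t ^ (γ-2) := by
    rw [← Real.rpow_add ht0, ← Real.rpow_add ht0]
    congr 1
    ring
  have hv1 : |(1-t) ^ γ| ≤ 1 := by
    rw [abs_of_nonneg (Real.rpow_pos_of_pos h1t0 _).le]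
    exact Real.rpow_le_one h1t0.le h1t1 hγp.le
  have hv3 : |(1-t) ^ (2*γ-1)| ≤ 1 := by
    rw [abs_of_nonneg (Real.rpow_pos_of_pos h1t0 _).le]
    exact Real.rpow_le_one h1t0.le h1t1 (by linarith)
  have hhalf : ∀ p : ℝ, p ≤ 0 → (1-t) ^ p ≤ (1/2:ℝ) ^ p := fun p hp =>
    Real.rpow_le_rpow_of_nonpos (by norm_num) h1t hp
  have hw1 : |(1-t) ^ (γ-1)| ≤ 2 := by
    rw [abs_of_nonneg (Real.rpow_pos_of_pos h1t0 _).le]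
    refine (hhalf _ (by linarith)).trans ?_
    calc ((1:ℝ)/2) ^ (γ-1) ≤ (1/2:ℝ) ^ (-1:ℝ) :=
          Real.rpow_le_rpow_of_exponent_ge (by norm_num) (by norm_num) (by linarith)
      _ = 2 := by rw [Real.rpow_neg_one]; norm_num
  have hw2 : |(1-t) ^ (γ-2)| ≤ 4 := by
    rw [abs_of_nonneg (Real.rpow_pos_of_pos h1t0 _).le]
    refine (hhalf _ (by linarith)).trans ?_
    calc ((1:ℝ)/2) ^ (γ-2) ≤ (1/2:ℝ) ^ (-2:ℝ) :=
          Real.rpow_le_rpow_of_exponent_ge (by norm_num) (by norm_num) (by linarith)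
      _ = 4 := by
          rw [show (-2:ℝ) = -(2:ℕ) by norm_num, Real.rpow_neg (by norm_num),
            Real.rpow_natCast]
          norm_num
  have hw3 : |(1-t) ^ (2*γ-2)| ≤ 2 := by
    rw [abs_of_nonneg (Real.rpow_pos_of_pos h1t0 _).le]
    refine (hhalf _ (by linarith)).trans ?_
    calc ((1:ℝ)/2) ^ (2*γ-2) ≤ (1/2:ℝ) ^ (-1:ℝ) :=
          Real.rpow_le_rpow_of_exponent_ge (by norm_num) (by norm_num) (by linarith)
      _ = 2 := by rw [Real.rpow_neg_one]; norm_num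
  have haa : |t ^ γ| ≤ t ^ γ := le_of_eq (abs_of_nonneg ha0.le)
  have hba : |t ^ (γ-1)| ≤ t ^ (γ-1) := le_of_eq (abs_of_nonneg hb0.le)
  have hca : |t ^ (γ-2)| ≤ t ^ (γ-2) := le_of_eq (abs_of_nonneg hc0.le)
  have hS1 : |(2*γ) * (2*γ-1) * (1-t) ^ (2*γ-2)| ≤ 4 * t ^ (γ-2) := by
    refine (mabs h22 hw3).trans ?_
    linarith
  have hS2 : |(2*γ) * (2*γ-1) * t ^ (2*γ-2)| ≤ 2 * t ^ (γ-2) := by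
    have hx : |t ^ (2*γ-2)| ≤ t ^ (γ-2) := by
      rw [abs_of_nonneg (Real.rpow_pos_of_pos ht0 _).le, e2c]
      linarith
    refine (mabs h22 hx).trans ?_
    linarith
  have hP : |γ * (γ-1) * t ^ (γ-2) * (1-t) ^ γ| ≤ (1/2) * t ^ (γ-2) := by
    refine (mabs (mabs hγγ hca) hv1).trans ?_
    linarith
  have hQ : |2 * γ ^ 2 * t ^ (γ-1) * (1-t) ^ (γ-1)| ≤ 4 * t ^ (γ-2) := by
    have hba' : |t ^ (γ-1)| ≤ t ^ (γ-2) := by rw [abs_of_nonneg hb0.le]; exact hbc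
    refine (mabs (mabs h2γ2 hba') hw1).trans ?_
    linarith
  have hR : |γ * (γ-1) * t ^ γ * (1-t) ^ (γ-2)| ≤ 2 * t ^ (γ-2) := by
    have haa' : |t ^ γ| ≤ t ^ (γ-2) := by rw [abs_of_nonneg ha0.le]; exact hac
    refine (mabs (mabs hγγ haa') hw2).trans ?_
    linarith
  have hPQR : |γ * (γ-1) * t ^ (γ-2) * (1-t) ^ γ - 2 * γ ^ 2 * t ^ (γ-1) * (1-t) ^ (γ-1)
      + γ * (γ-1) * t ^ γ * (1-t) ^ (γ-2)| ≤ 13/2 * t ^ (γ-2) := by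
    refine (abs_add_three _ _ _).trans ?_
    rw [abs_neg]
    linarith
  have hS3 : |(-(2 * Real.cos (γ * Real.pi) *
      (γ * (γ-1) * t ^ (γ-2) * (1-t) ^ γ - 2 * γ ^ 2 * t ^ (γ-1) * (1-t) ^ (γ-1)
        + γ * (γ-1) * t ^ γ * (1-t) ^ (γ-2))))| ≤ 13 * t ^ (γ-2) := by
    rw [abs_neg]
    refine (mabs h2co hPQR).trans ?_
    linarith
  have expand : Dd2 γ t = (2*γ) * (2*γ-1) * (1-t) ^ (2*γ-2) + (2*γ) * (2*γ-1) * t ^ (2*γ-2)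
      + (-(2 * Real.cos (γ * Real.pi) *
        (γ * (γ-1) * t ^ (γ-2) * (1-t) ^ γ - 2 * γ ^ 2 * t ^ (γ-1) * (1-t) ^ (γ-1)
          + γ * (γ-1) * t ^ γ * (1-t) ^ (γ-2)))) := by
    unfold Dd2; ring
  rw [expand]
  refine (abs_add_three _ _ _).trans ?_
  linarith

noncomputable def deltaγ (γ : ℝ) : ℝ := min (1/2) ((1/12:ℝ) ^ (γ⁻¹))

lemma delta_pos (hγ0 : 1 / 2 < γ) : 0 < deltaγ γ :=
  lt_min (by norm_num) (Real.rpow_pos_of_pos (by norm_num) _)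

lemma delta_le : deltaγ γ ≤ 1/2 := min_le_left _ _

lemma tpow_le (hγ0 : 1 / 2 < γ) (ht : t ∈ Ioc (0:ℝ) (deltaγ γ)) : t ^ γ ≤ 1/12 := by
  have hγp : (0:ℝ) < γ := by linarith
  have h1 : t ≤ (1/12:ℝ) ^ (γ⁻¹) := ht.2.trans (min_le_right _ _)
  calc t ^ γ ≤ ((1/12:ℝ) ^ (γ⁻¹)) ^ γ := Real.rpow_le_rpow ht.1.le h1 hγp.le
    _ = (1/12:ℝ) ^ (γ⁻¹ * γ) := (Real.rpow_mul (by norm_num) _ _).symm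
    _ = 1/12 := by rw [inv_mul_cancel₀ hγp.ne', Real.rpow_one]

lemma Dd_bounds (hγ0 : 1 / 2 < γ) (hγ1 : γ < 1) (ht : t ∈ Ioc (0:ℝ) (deltaγ γ)) :
    1/2 ≤ Dd γ t ∧ Dd γ t ≤ 3/2 := by
  have ht' : t ∈ Ioc (0:ℝ) (1/2) := ⟨ht.1, ht.2.trans delta_le⟩
  have h1 := est1 hγ0 hγ1 ht'
  have h2 := tpow_le hγ0 ht
  have h3 := abs_le.mp (show |1 - Dd γ t| ≤ 1/2 from h1.trans (by linarith))
  constructor <;> linarith [h3.1, h3.2]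

lemma rr_eq (hγ0 : 1 / 2 < γ) (hγ1 : γ < 1) (ht : t ∈ Ioo (0:ℝ) 1) :
    rr γ t = (cc γ * γ * t ^ (γ-1) * Dd γ t * (1 - Dd γ t) - cc γ * t ^ γ * Dd1 γ t)
      / (Dd γ t) ^ 2 := by
  have hD := (Dd_pos hγ0 hγ1 ht).ne'
  unfold rr hd1
  field_simp
  ring

lemma rr_bound (hγ0 : 1 / 2 < γ) (hγ1 : γ < 1) (ht : t ∈ Ioc (0:ℝ) (deltaγ γ)) :
    |rr γ t| ≤ 84 * cc γ * t ^ (2*γ-1) := by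
  have hγp : (0:ℝ) < γ := by linarith
  have ht' : t ∈ Ioc (0:ℝ) (1/2) := ⟨ht.1, ht.2.trans delta_le⟩
  have ht'' : t ∈ Ioo (0:ℝ) 1 := ⟨ht.1, lt_of_le_of_lt ht'.2 (by norm_num)⟩
  obtain ⟨hD1', hD2'⟩ := Dd_bounds hγ0 hγ1 ht
  have hccp := cc_pos hγ0 hγ1
  have ht0 := ht.1
  have ha0 : 0 < t ^ γ := Real.rpow_pos_of_pos ht0 _
  have hb0 : 0 < t ^ (γ-1) := Real.rpow_pos_of_pos ht0 _
  have e2b : t ^ (2*γ-1) = t ^ γ * t ^ (γ-1) := by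
    rw [show 2*γ-1 = γ + (γ-1) by ring, Real.rpow_add ht0]
  have hDabs : |Dd γ t| ≤ 3/2 := by rw [abs_of_nonneg (by linarith)]; linarith
  have h1D : |1 - Dd γ t| ≤ 6 * t ^ γ := est1 hγ0 hγ1 ht'
  have hD1 : |Dd1 γ t| ≤ 12 * t ^ (γ-1) := est2 hγ0 hγ1 ht'
  have hba : |t ^ (γ-1)| ≤ t ^ (γ-1) := le_of_eq (abs_of_nonneg hb0.le)
  have haa : |t ^ γ| ≤ t ^ γ := le_of_eq (abs_of_nonneg ha0.le)
  have hccγ : |cc γ * γ| ≤ cc γ := by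
    rw [abs_of_nonneg (by positivity)]
    nlinarith
  have hcc1 : |cc γ| ≤ cc γ := le_of_eq (abs_of_nonneg hccp.le)
  have hT1 := mabs (mabs (mabs hccγ hba) hDabs) h1D
  have hT2 := mabs (mabs hcc1 haa) hD1
  have hnum : |cc γ * γ * t ^ (γ-1) * Dd γ t * (1 - Dd γ t) - cc γ * t ^ γ * Dd1 γ t|
      ≤ cc γ * t ^ (γ-1) * (3/2) * (6 * t ^ γ) + cc γ * t ^ γ * (12 * t ^ (γ-1)) :=
    (abs_sub _ _).trans (by linarith)
  rw [rr_eq hγ0 hγ1 ht'', abs_div, abs_of_nonneg (by positivity : (0:ℝ) ≤ (Dd γ t)^2)]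
  have hq : (1/4:ℝ) ≤ (Dd γ t) ^ 2 := by nlinarith
  have hdivle : |cc γ * γ * t ^ (γ-1) * Dd γ t * (1 - Dd γ t) - cc γ * t ^ γ * Dd1 γ t|
      / (Dd γ t) ^ 2 ≤ |cc γ * γ * t ^ (γ-1) * Dd γ t * (1 - Dd γ t) - cc γ * t ^ γ * Dd1 γ t|
      / (1/4) := div_le_div_of_nonneg_left (abs_nonneg _) (by norm_num) hq
  refine hdivle.trans ?_
  have h4 : |cc γ * γ * t ^ (γ-1) * Dd γ t * (1 - Dd γ t) - cc γ * t ^ γ * Dd1 γ t| / (1/4)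
      = 4 * |cc γ * γ * t ^ (γ-1) * Dd γ t * (1 - Dd γ t) - cc γ * t ^ γ * Dd1 γ t| := by
    ring
  rw [h4, e2b]
  linarith [hnum]

set_option maxHeartbeats 1000000 in
lemma rr1_bound (hγ0 : 1 / 2 < γ) (hγ1 : γ < 1) (ht : t ∈ Ioc (0:ℝ) (deltaγ γ)) :
    |rr1 γ t| ≤ 3008 * cc γ * t ^ (2*γ-2) := by
  have hγp : (0:ℝ) < γ := by linarith
  have ht' : t ∈ Ioc (0:ℝ) (1/2) := ⟨ht.1, ht.2.trans delta_le⟩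
  have ht'' : t ∈ Ioo (0:ℝ) 1 := ⟨ht.1, lt_of_le_of_lt ht'.2 (by norm_num)⟩
  obtain ⟨hDlb, hDub⟩ := Dd_bounds hγ0 hγ1 ht
  have hccp := cc_pos hγ0 hγ1
  have ht0 := ht.1
  have ht1 : t ≤ 1 := le_trans ht'.2 (by norm_num)
  have ha0 : 0 < t ^ γ := Real.rpow_pos_of_pos ht0 _
  have hb0 : 0 < t ^ (γ-1) := Real.rpow_pos_of_pos ht0 _
  have hc0 : 0 < t ^ (γ-2) := Real.rpow_pos_of_pos ht0 _
  have ha1 : t ^ γ ≤ 1 := Real.rpow_le_one ht0.le ht1 hγp.le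
  have e2c : t ^ (2*γ-2) = t ^ γ * t ^ (γ-2) := by
    rw [show 2*γ-2 = γ + (γ-2) by ring, Real.rpow_add ht0]
  have e2d : t ^ (γ-1) * t ^ (γ-1) = t ^ γ * t ^ (γ-2) := by
    rw [← Real.rpow_add ht0, ← Real.rpow_add ht0]
    congr 1
    ring
  have hDabs : |Dd γ t| ≤ 3/2 := by rw [abs_of_nonneg (by linarith)]; linarith
  have h1D : |1 - Dd γ t| ≤ 6 * t ^ γ := est1 hγ0 hγ1 ht'
  have hD1 : |Dd1 γ t| ≤ 12 * t ^ (γ-1) := est2 hγ0 hγ1 ht'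
  have hD2 : |Dd2 γ t| ≤ 30 * t ^ (γ-2) := est3 hγ0 hγ1 ht'
  have hba : |t ^ (γ-1)| ≤ t ^ (γ-1) := le_of_eq (abs_of_nonneg hb0.le)
  have haa : |t ^ γ| ≤ t ^ γ := le_of_eq (abs_of_nonneg ha0.le)
  have hca : |t ^ (γ-2)| ≤ t ^ (γ-2) := le_of_eq (abs_of_nonneg hc0.le)
  have hccγ : |cc γ * γ| ≤ cc γ := by
    rw [abs_of_nonneg (by positivity)]
    nlinarith
  have hcc1 : |cc γ| ≤ cc γ := le_of_eq (abs_of_nonneg hccp.le)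
  have hγ1' : |γ - 1| ≤ 1/2 := by rw [abs_of_nonpos (by linarith)]; linarith
  have hccγγ : |cc γ * γ * (γ-1)| ≤ cc γ * (1/2) := mabs hccγ hγ1'
  -- |D * (I1 - I2)|
  have hI1 := mabs (mabs (mabs hccγγ hca) hDabs) h1D
  have hI2 := mabs (mabs hcc1 haa) hD2
  have hI12 : |cc γ * γ * (γ-1) * t ^ (γ-2) * Dd γ t * (1 - Dd γ t) - cc γ * t ^ γ * Dd2 γ t|
      ≤ cc γ * (1/2) * t ^ (γ-2) * (3/2) * (6 * t ^ γ) + cc γ * t ^ γ * (30 * t ^ (γ-2)) :=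
    (abs_sub _ _).trans (by linarith)
  have hDI := mabs hDabs hI12
  -- E0 part
  have hγa' : |γ| ≤ 1 := by rw [abs_of_nonneg hγp.le]; linarith
  have hE1 := mabs (mabs hcc1 (mabs hγa' hba)) hDabs
  have hE2 := mabs (mabs hcc1 haa) hD1
  have hE0 : |cc γ * (γ * t ^ (γ-1)) * Dd γ t - cc γ * t ^ γ * Dd1 γ t|
      ≤ cc γ * (1 * t ^ (γ-1)) * (3/2) + cc γ * t ^ γ * (12 * t ^ (γ-1)) :=
    (abs_sub _ _).trans (by linarith)
  have h2D1 : |2 * Dd1 γ t| ≤ 2 * (12 * t ^ (γ-1)) :=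
    mabs (le_of_eq (abs_of_nonneg (by norm_num : (0:ℝ) ≤ 2))) hD1
  have h2D1E0 := mabs h2D1 hE0
  have hnum : |Dd γ t * (cc γ * γ * (γ-1) * t ^ (γ-2) * Dd γ t * (1 - Dd γ t)
        - cc γ * t ^ γ * Dd2 γ t)
      - 2 * Dd1 γ t * (cc γ * (γ * t ^ (γ-1)) * Dd γ t - cc γ * t ^ γ * Dd1 γ t)|
      ≤ 3/2 * (cc γ * (1/2) * t ^ (γ-2) * (3/2) * (6 * t ^ γ) + cc γ * t ^ γ * (30 * t ^ (γ-2)))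
        + 2 * (12 * t ^ (γ-1)) * (cc γ * (1 * t ^ (γ-1)) * (3/2)
          + cc γ * t ^ γ * (12 * t ^ (γ-1))) :=
    (abs_sub _ _).trans (by linarith)
  unfold rr1
  rw [abs_div, abs_of_nonneg (by positivity : (0:ℝ) ≤ (Dd γ t)^3)]
  have hq : (1/8:ℝ) ≤ (Dd γ t) ^ 3 := by
    have h := pow_le_pow_left₀ (by norm_num : (0:ℝ) ≤ 1/2) hDlb 3
    norm_num at h
    linarith
  set N := Dd γ t * (cc γ * γ * (γ-1) * t ^ (γ-2) * Dd γ t * (1 - Dd γ t)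
        - cc γ * t ^ γ * Dd2 γ t)
      - 2 * Dd1 γ t * (cc γ * (γ * t ^ (γ-1)) * Dd γ t - cc γ * t ^ γ * Dd1 γ t) with hN
  have hdivle : |N| / (Dd γ t) ^ 3 ≤ |N| / (1/8) :=
    div_le_div_of_nonneg_left (abs_nonneg _) (by norm_num) hq
  refine hdivle.trans ?_
  have h8 : |N| / (1/8) = 8 * |N| := by ring
  rw [h8, e2c]
  -- monomial facts
  have q2 : cc γ * (t ^ (γ-1) * t ^ (γ-1)) = cc γ * (t ^ γ * t ^ (γ-2)) := by rw [e2d]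
  have q1 : cc γ * (t ^ γ * (t ^ (γ-1) * t ^ (γ-1))) ≤ cc γ * (t ^ γ * t ^ (γ-2)) := by
    rw [e2d]
    have h := mul_le_of_le_one_left (show (0:ℝ) ≤ t ^ γ * t ^ (γ-2) by positivity) ha1
    exact mul_le_mul_of_nonneg_left h hccp.le
  linarith only [hnum, q1, q2, abs_nonneg N]

end Basic

section Beta

variable {p q : ℝ}

lemma cpow_ofReal_eq (hx : x ∈ Ioc (0:ℝ) 1) :
    (x:ℂ) ^ ((p:ℂ) - 1) * (1 - (x:ℂ)) ^ ((q:ℂ) - 1)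
      = ((x ^ (p-1) * (1-x) ^ (q-1) : ℝ) : ℂ) := by
  rw [show ((p:ℂ) - 1) = ((p - 1 : ℝ) : ℂ) by push_cast; ring,
    show ((q:ℂ) - 1) = ((q - 1 : ℝ) : ℂ) by push_cast; ring,
    show (1 - (x:ℂ)) = ((1 - x : ℝ) : ℂ) by push_cast; ring,
    ← Complex.ofReal_cpow hx.1.le, ← Complex.ofReal_cpow (by linarith [hx.2]),
    ← Complex.ofReal_mul]

lemma betaIntegrable (hp : 0 < p) (hq : 0 < q) :
    IntervalIntegrable (fun s : ℝ => s ^ (p-1) * (1-s) ^ (q-1)) volume 0 1 := by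
  have hc := Complex.betaIntegral_convergent (u := (p:ℂ)) (v := (q:ℂ)) (by simpa) (by simpa)
  rw [intervalIntegrable_iff] at hc ⊢
  refine (hc.re).congr ?_
  rw [Filter.EventuallyEq, ae_restrict_iff' measurableSet_uIoc]
  refine Filter.Eventually.of_forall fun x hx => ?_
  rw [uIoc_of_le zero_le_one] at hx
  rw [cpow_ofReal_eq hx]
  simp

lemma betaVal (hp : 0 < p) (hq : 0 < q) :
    ∫ s in (0:ℝ)..1, s ^ (p-1) * (1-s) ^ (q-1)
      = Real.Gamma p * Real.Gamma q / Real.Gamma (p+q) := by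
  have key := Complex.Gamma_mul_Gamma_eq_betaIntegral
    (s := (p:ℂ)) (t := (q:ℂ)) (by simpa) (by simpa)
  have hint : Complex.betaIntegral (p:ℂ) (q:ℂ)
      = ((∫ s in (0:ℝ)..1, s ^ (p-1) * (1-s) ^ (q-1) : ℝ) : ℂ) := by
    rw [Complex.betaIntegral, ← intervalIntegral.integral_ofReal]
    refine intervalIntegral.integral_congr_ae ?_
    refine Filter.Eventually.of_forall fun x hx => ?_
    rw [uIoc_of_le zero_le_one] at hx
    exact cpow_ofReal_eq hx
  rw [hint, ← Complex.ofReal_add, Complex.Gamma_ofReal, Complex.Gamma_ofReal,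
    Complex.Gamma_ofReal, ← Complex.ofReal_mul, ← Complex.ofReal_mul] at key
  have hreal : Real.Gamma p * Real.Gamma q
      = Real.Gamma (p+q) * ∫ s in (0:ℝ)..1, s ^ (p-1) * (1-s) ^ (q-1) :=
    mod_cast key
  have hG : 0 < Real.Gamma (p+q) := Real.Gamma_pos_of_pos (by linarith)
  field_simp [hG.ne'] at hreal ⊢
  linarith [hreal]

end Beta

section Main

open scoped Interval

variable {γ x t : ℝ}

lemma contOn_rpow (a : ℝ) : ContinuousOn (fun t : ℝ => t ^ a) (Ioo (0:ℝ) 1) :=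
  continuousOn_id.rpow_const fun _ ht => Or.inl (ne_of_gt ht.1)

lemma contOn_rpow1 (a : ℝ) : ContinuousOn (fun t : ℝ => (1-t) ^ a) (Ioo (0:ℝ) 1) :=
  (continuousOn_const.sub continuousOn_id).rpow_const fun t ht =>
    Or.inl (ne_of_gt (show (0:ℝ) < 1 - t by linarith [ht.2]))

lemma contOn_Dd : ContinuousOn (Dd γ) (Ioo (0:ℝ) 1) := by
  unfold Dd
  exact ((contOn_rpow1 _).add (contOn_rpow _)).sub
    (((continuousOn_const.mul (contOn_rpow _)).mul (contOn_rpow1 _)).mul continuousOn_const)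

lemma contOn_Dd1 : ContinuousOn (Dd1 γ) (Ioo (0:ℝ) 1) := by
  unfold Dd1
  exact (((continuousOn_const.mul (contOn_rpow1 _)).add
      (continuousOn_const.mul (contOn_rpow _))).sub
    (continuousOn_const.mul
      ((((continuousOn_const.mul (contOn_rpow _)).mul (contOn_rpow1 _))).sub
        ((continuousOn_const.mul (contOn_rpow _)).mul (contOn_rpow1 _)))))

lemma contOn_Dd2 : ContinuousOn (Dd2 γ) (Ioo (0:ℝ) 1) := by
  unfold Dd2
  exact (((continuousOn_const.mul (contOn_rpow1 _)).add
      (continuousOn_const.mul (contOn_rpow _))).sub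
    (continuousOn_const.mul
      (((((continuousOn_const.mul (contOn_rpow _)).mul (contOn_rpow1 _))).sub
        ((continuousOn_const.mul (contOn_rpow _)).mul (contOn_rpow1 _))).add
        ((continuousOn_const.mul (contOn_rpow _)).mul (contOn_rpow1 _)))))

lemma contOn_rr (hγ0 : 1 / 2 < γ) (hγ1 : γ < 1) : ContinuousOn (rr γ) (Ioo (0:ℝ) 1) := by
  unfold rr hd1
  refine ContinuousOn.sub ?_ (continuousOn_const.mul (contOn_rpow _))
  refine ContinuousOn.div ?_ (contOn_Dd.pow 2)
    (fun t ht => pow_ne_zero _ (Dd_pos hγ0 hγ1 ht).ne')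
  exact ((continuousOn_const.mul (continuousOn_const.mul (contOn_rpow _))).mul contOn_Dd).sub
    ((continuousOn_const.mul (contOn_rpow _)).mul contOn_Dd1)

lemma contOn_rr1 (hγ0 : 1 / 2 < γ) (hγ1 : γ < 1) : ContinuousOn (rr1 γ) (Ioo (0:ℝ) 1) := by
  unfold rr1
  refine ContinuousOn.div ?_ (contOn_Dd.pow 3)
    (fun t ht => pow_ne_zero _ (Dd_pos hγ0 hγ1 ht).ne')
  refine ContinuousOn.sub (contOn_Dd.mul (ContinuousOn.sub ?_ ?_)) ?_
  · exact (((continuousOn_const.mul (contOn_rpow _)).mul contOn_Dd).mul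
      (continuousOn_const.sub contOn_Dd))
  · exact (continuousOn_const.mul (contOn_rpow _)).mul contOn_Dd2
  · exact (continuousOn_const.mul contOn_Dd1).mul
      (((continuousOn_const.mul (continuousOn_const.mul (contOn_rpow _))).mul contOn_Dd).sub
        ((continuousOn_const.mul (contOn_rpow _)).mul contOn_Dd1))

noncomputable def gg (γ x : ℝ) : ℝ := ∫ s in (0:ℝ)..1, (1-s) ^ (γ-1) * rr γ (x*s)

noncomputable def gg1 (γ x : ℝ) : ℝ := ∫ s in (0:ℝ)..1, (1-s) ^ (γ-1) * (rr1 γ (x*s) * s)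

noncomputable def Bconst (γ : ℝ) : ℝ := Real.Gamma γ ^ 2 / Real.Gamma (2*γ)

noncomputable def B2const (γ : ℝ) : ℝ := ∫ s in (0:ℝ)..1, s ^ (2*γ-1) * (1-s) ^ (γ-1)

lemma B2const_nonneg (hγ0 : 1 / 2 < γ) (hγ1 : γ < 1) : 0 ≤ B2const γ := by
  refine intervalIntegral.integral_nonneg zero_le_one fun s hs => ?_
  have h1 : (0:ℝ) ≤ s ^ (2*γ-1) := Real.rpow_nonneg hs.1 _
  have h2 : (0:ℝ) ≤ (1-s) ^ (γ-1) := Real.rpow_nonneg (by linarith [hs.2]) _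
  positivity

lemma mapsTo_mul (hx0 : 0 < x) (hx1 : x < 1) (hs : s ∈ Ioc (0:ℝ) 1) : x * s ∈ Ioo (0:ℝ) 1 :=
  ⟨mul_pos hx0 hs.1, lt_of_le_of_lt (by nlinarith [hs.2]) hx1⟩

lemma meas_F (hγ0 : 1 / 2 < γ) (hγ1 : γ < 1) (hx0 : 0 < x) (hx1 : x < 1) :
    AEStronglyMeasurable (fun s => (1-s) ^ (γ-1) * rr γ (x*s))
      (volume.restrict (Ι (0:ℝ) 1)) := by
  rw [uIoc_of_le zero_le_one, ← Measure.restrict_congr_set Ioo_ae_eq_Ioc]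
  refine ContinuousOn.aestronglyMeasurable ?_ measurableSet_Ioo
  refine ContinuousOn.mul (contOn_rpow1 _) ?_
  exact (contOn_rr hγ0 hγ1).comp (continuous_const.mul continuous_id).continuousOn
    fun s hs => mapsTo_mul hx0 hx1 ⟨hs.1, hs.2.le⟩

lemma meas_F' (hγ0 : 1 / 2 < γ) (hγ1 : γ < 1) (hx0 : 0 < x) (hx1 : x < 1) :
    AEStronglyMeasurable (fun s => (1-s) ^ (γ-1) * (rr1 γ (x*s) * s))
      (volume.restrict (Ι (0:ℝ) 1)) := by
  rw [uIoc_of_le zero_le_one, ← Measure.restrict_congr_set Ioo_ae_eq_Ioc]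
  refine ContinuousOn.aestronglyMeasurable ?_ measurableSet_Ioo
  refine ContinuousOn.mul (contOn_rpow1 _) (ContinuousOn.mul ?_ continuousOn_id)
  exact (contOn_rr1 hγ0 hγ1).comp (continuous_const.mul continuous_id).continuousOn
    fun s hs => mapsTo_mul hx0 hx1 ⟨hs.1, hs.2.le⟩

lemma rr_bound' (hγ0 : 1 / 2 < γ) (hγ1 : γ < 1) (hx : x ∈ Ioc (0:ℝ) (deltaγ γ))
    (hs : s ∈ Ioc (0:ℝ) 1) :
    |rr γ (x*s)| ≤ 84 * cc γ * x ^ (2*γ-1) * s ^ (2*γ-1) := by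
  have hxs : x * s ∈ Ioc (0:ℝ) (deltaγ γ) :=
    ⟨mul_pos hx.1 hs.1, le_trans (by nlinarith [hs.2, hx.1]) hx.2⟩
  have h := rr_bound hγ0 hγ1 hxs
  rwa [Real.mul_rpow hx.1.le hs.1.le, ← mul_assoc] at h

lemma rr1_bound' (hγ0 : 1 / 2 < γ) (hγ1 : γ < 1) (hx : x ∈ Ioc (0:ℝ) (deltaγ γ))
    (hs : s ∈ Ioc (0:ℝ) 1) :
    |rr1 γ (x*s)| ≤ 3008 * cc γ * x ^ (2*γ-2) * s ^ (2*γ-2) := by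
  have hxs : x * s ∈ Ioc (0:ℝ) (deltaγ γ) :=
    ⟨mul_pos hx.1 hs.1, le_trans (by nlinarith [hs.2, hx.1]) hx.2⟩
  have h := rr1_bound hγ0 hγ1 hxs
  rwa [Real.mul_rpow hx.1.le hs.1.le, ← mul_assoc] at h

lemma int_F (hγ0 : 1 / 2 < γ) (hγ1 : γ < 1) (hx : x ∈ Ioc (0:ℝ) (deltaγ γ)) :
    IntervalIntegrable (fun s => (1-s) ^ (γ-1) * rr γ (x*s)) volume 0 1 := by
  have hx1 : x < 1 := lt_of_le_of_lt (hx.2.trans delta_le) (by norm_num)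
  refine IntervalIntegrable.mono_fun
    (((betaIntegrable (p := 2*γ) (q := γ) (by linarith) (by linarith)).const_mul
      (84 * cc γ * x ^ (2*γ-1)))) (meas_F hγ0 hγ1 hx.1 hx1) ?_
  rw [Filter.EventuallyLE, ae_restrict_iff' measurableSet_uIoc]
  refine Filter.Eventually.of_forall fun s hs => ?_
  rw [uIoc_of_le zero_le_one] at hs
  have h1s : (0:ℝ) ≤ (1-s) ^ (γ-1) := Real.rpow_nonneg (by linarith [hs.2]) _
  have hss : (0:ℝ) ≤ s ^ (2*γ-1) := Real.rpow_nonneg hs.1.le _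
  have hcc := cc_pos hγ0 hγ1
  have hxp : (0:ℝ) ≤ x ^ (2*γ-1) := Real.rpow_nonneg hx.1.le _
  have hb := rr_bound' hγ0 hγ1 hx hs
  simp only [Real.norm_eq_abs]
  rw [abs_mul, abs_of_nonneg h1s, abs_of_nonneg (by positivity :
    (0:ℝ) ≤ 84 * cc γ * x ^ (2*γ-1) * (s ^ (2*γ-1) * (1-s) ^ (γ-1)))]
  calc (1-s) ^ (γ-1) * |rr γ (x*s)|
      ≤ (1-s) ^ (γ-1) * (84 * cc γ * x ^ (2*γ-1) * s ^ (2*γ-1)) :=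
        mul_le_mul_of_nonneg_left hb h1s
    _ = 84 * cc γ * x ^ (2*γ-1) * (s ^ (2*γ-1) * (1-s) ^ (γ-1)) := by ring

lemma HDist_rep (hγ0 : 1 / 2 < γ) (hγ1 : γ < 1) (hx : x ∈ Ioo (0:ℝ) (deltaγ γ)) :
    HDist γ x = cc γ * γ * Bconst γ * x ^ (2*γ-1) + x ^ γ * gg γ x := by
  obtain ⟨hx0, hxδ⟩ := hx
  have hx1 : x < 1 := lt_of_lt_of_le hxδ (delta_le.trans (by norm_num))
  have hxIoc : x ∈ Ioc (0:ℝ) (deltaγ γ) := ⟨hx0, hxδ.le⟩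
  -- step 1 : change of variables
  have step1 := intervalIntegral.integral_comp_mul_left (a := (0:ℝ)) (b := 1)
    (fun t => (x - t) ^ (γ-1) * deriv (hDens γ) t) hx0.ne'
  simp only [mul_zero, mul_one, smul_eq_mul] at step1
  have hH : HDist γ x = x * ∫ s in (0:ℝ)..1, (x - x*s) ^ (γ-1) * deriv (hDens γ) (x*s) := by
    rw [step1, HDist]
    field_simp
  -- step 2 : rewrite integrand
  have step2 : ∫ s in (0:ℝ)..1, (x - x*s) ^ (γ-1) * deriv (hDens γ) (x*s)
      = ∫ s in (0:ℝ)..1, ((cc γ * γ * x ^ (2*γ-2)) * (s ^ (γ-1) * (1-s) ^ (γ-1))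
        + x ^ (γ-1) * ((1-s) ^ (γ-1) * rr γ (x*s))) := by
    refine intervalIntegral.integral_congr_ae ?_
    refine Filter.Eventually.of_forall fun s hs => ?_
    rw [uIoc_of_le zero_le_one] at hs
    have hxs : x * s ∈ Ioo (0:ℝ) 1 := mapsTo_mul hx0 hx1 hs
    have e1 : (x - x*s) ^ (γ-1) = x ^ (γ-1) * (1-s) ^ (γ-1) := by
      rw [show x - x*s = x * (1-s) by ring, Real.mul_rpow hx0.le (by linarith [hs.2])]
    have e2 : deriv (hDens γ) (x*s) = cc γ * γ * (x*s) ^ (γ-1) + rr γ (x*s) :=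
      deriv_hDens hγ0 hγ1 hxs
    have e3 : (x*s) ^ (γ-1) = x ^ (γ-1) * s ^ (γ-1) := Real.mul_rpow hx0.le hs.1.le
    have e4 : x ^ (γ-1) * x ^ (γ-1) = x ^ (2*γ-2) := by
      rw [← Real.rpow_add hx0]
      congr 1
      ring
    rw [e1, e2, e3, ← e4]
    ring
  -- step 3 : split
  have i1 : IntervalIntegrable
      (fun s => (cc γ * γ * x ^ (2*γ-2)) * (s ^ (γ-1) * (1-s) ^ (γ-1))) volume 0 1 :=
    (betaIntegrable (p := γ) (q := γ) (by linarith) (by linarith)).const_mul _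
  have i2 : IntervalIntegrable
      (fun s => x ^ (γ-1) * ((1-s) ^ (γ-1) * rr γ (x*s))) volume 0 1 :=
    (int_F hγ0 hγ1 hxIoc).const_mul _
  rw [hH, step2, intervalIntegral.integral_add i1 i2, intervalIntegral.integral_const_mul,
    intervalIntegral.integral_const_mul]
  have hbeta : ∫ s in (0:ℝ)..1, s ^ (γ-1) * (1-s) ^ (γ-1) = Bconst γ := by
    rw [betaVal (by linarith) (by linarith), Bconst]
    rw [show γ + γ = 2*γ by ring]
    ring
  rw [hbeta]
  have hgg : (∫ s in (0:ℝ)..1, (1-s) ^ (γ-1) * rr γ (x*s)) = gg γ x := rfl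
  rw [hgg]
  have e5 : x * x ^ (2*γ-2) = x ^ (2*γ-1) := by
    nth_rewrite 1 [← Real.rpow_one x]
    rw [← Real.rpow_add hx0]
    congr 1
    ring
  have e6 : x * x ^ (γ-1) = x ^ γ := by
    nth_rewrite 1 [← Real.rpow_one x]
    rw [← Real.rpow_add hx0]
    congr 1
    ring
  rw [← e5, ← e6]
  ring

lemma gg_bound (hγ0 : 1 / 2 < γ) (hγ1 : γ < 1) (hx : x ∈ Ioc (0:ℝ) (deltaγ γ)) :
    |gg γ x| ≤ 84 * cc γ * B2const γ * x ^ (2*γ-1) := by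
  have hcc := cc_pos hγ0 hγ1
  have hbound : ∀ᵐ s ∂(volume.restrict (Ι (0:ℝ) 1)),
      ‖(1-s) ^ (γ-1) * rr γ (x*s)‖
        ≤ (84 * cc γ * x ^ (2*γ-1)) * (s ^ (2*γ-1) * (1-s) ^ (γ-1)) := by
    rw [ae_restrict_iff' measurableSet_uIoc]
    refine Filter.Eventually.of_forall fun s hs => ?_
    rw [uIoc_of_le zero_le_one] at hs
    have h1s : (0:ℝ) ≤ (1-s) ^ (γ-1) := Real.rpow_nonneg (by linarith [hs.2]) _
    have hb := rr_bound' hγ0 hγ1 hx hs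
    rw [Real.norm_eq_abs, abs_mul, abs_of_nonneg h1s]
    calc (1-s) ^ (γ-1) * |rr γ (x*s)|
        ≤ (1-s) ^ (γ-1) * (84 * cc γ * x ^ (2*γ-1) * s ^ (2*γ-1)) :=
          mul_le_mul_of_nonneg_left hb h1s
      _ = (84 * cc γ * x ^ (2*γ-1)) * (s ^ (2*γ-1) * (1-s) ^ (γ-1)) := by ring
  have h := intervalIntegral.norm_integral_le_abs_of_norm_le hbound
    (((betaIntegrable (p := 2*γ) (q := γ) (by linarith) (by linarith)).const_mul
      (84 * cc γ * x ^ (2*γ-1))))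
  rw [Real.norm_eq_abs] at h
  refine h.trans ?_
  rw [intervalIntegral.integral_const_mul]
  have hB : ∫ s in (0:ℝ)..1, s ^ (2*γ-1) * (1-s) ^ (γ-1) = B2const γ := rfl
  have hBn := B2const_nonneg hγ0 hγ1
  have hxp : (0:ℝ) ≤ x ^ (2*γ-1) := Real.rpow_nonneg hx.1.le _
  rw [hB, abs_of_nonneg (mul_nonneg (mul_nonneg (mul_nonneg (by norm_num) hcc.le) hxp) hBn)]
  exact le_of_eq (by ring)

lemma hasDerivAt_gg (hγ0 : 1 / 2 < γ) (hγ1 : γ < 1)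
    (hx : x ∈ Ioo (0:ℝ) (2/3 * deltaγ γ)) : HasDerivAt (gg γ) (gg1 γ x) x := by
  obtain ⟨hx0, hx23⟩ := hx
  have hδ := delta_pos hγ0
  have hδle : deltaγ γ ≤ 1/2 := delta_le
  have hcc := cc_pos hγ0 hγ1
  have hx1 : x < 1 := by linarith
  have hε : (0:ℝ) < x/2 := by linarith
  have hball : ∀ y ∈ Metric.ball x (x/2), y ∈ Ioc (0:ℝ) (deltaγ γ) ∧ x/2 ≤ y := by
    intro y hy
    rw [Metric.mem_ball, Real.dist_eq, abs_lt] at hy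
    constructor
    · constructor
      · linarith [hy.1]
      · linarith [hy.2]
    · linarith [hy.1]
  have key := intervalIntegral.hasDerivAt_integral_of_dominated_loc_of_deriv_le
    (μ := volume)
    (F := fun x s => (1-s) ^ (γ-1) * rr γ (x*s))
    (F' := fun x s => (1-s) ^ (γ-1) * (rr1 γ (x*s) * s))
    (a := 0) (b := 1) (x₀ := x)
    (bound := fun s => (3008 * cc γ * (x/2) ^ (2*γ-2)) * (s ^ (2*γ-1) * (1-s) ^ (γ-1)))
    (Metric.ball_mem_nhds x hε) ?_ ?_ ?_ ?_ ?_ ?_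
  · exact key.2
  · -- measurability eventually
    have hmem : Ioo (0:ℝ) 1 ∈ nhds x := isOpen_Ioo.mem_nhds ⟨hx0, hx1⟩
    filter_upwards [hmem] with y hy
    exact meas_F hγ0 hγ1 hy.1 hy.2
  · exact int_F hγ0 hγ1 ⟨hx0, by linarith⟩
  · exact meas_F' hγ0 hγ1 hx0 hx1
  · -- bound
    refine Filter.Eventually.of_forall fun s hs y hy => ?_
    rw [uIoc_of_le zero_le_one] at hs
    obtain ⟨hyIoc, hy2⟩ := hball y hy
    have h1s : (0:ℝ) ≤ (1-s) ^ (γ-1) := Real.rpow_nonneg (by linarith [hs.2]) _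
    have hb := rr1_bound' hγ0 hγ1 hyIoc hs
    have hy0 := hyIoc.1
    -- y ^ (2γ-2) ≤ (x/2) ^ (2γ-2)
    have hmono : y ^ (2*γ-2) ≤ (x/2) ^ (2*γ-2) :=
      Real.rpow_le_rpow_of_nonpos (by linarith) hy2 (by linarith)
    have hb2 : |rr1 γ (y*s)| ≤ 3008 * cc γ * (x/2) ^ (2*γ-2) * s ^ (2*γ-2) := by
      refine hb.trans ?_
      have hss : (0:ℝ) ≤ s ^ (2*γ-2) := Real.rpow_nonneg hs.1.le _
      have := mul_le_mul_of_nonneg_right hmono hss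
      nlinarith [this, hcc]
    rw [Real.norm_eq_abs, abs_mul, abs_of_nonneg h1s, abs_mul,
      abs_of_nonneg hs.1.le]
    have e1 : s ^ (2*γ-2) * s = s ^ (2*γ-1) := by
      nth_rewrite 2 [← Real.rpow_one s]
      rw [← Real.rpow_add hs.1]
      congr 1
      ring
    calc (1-s) ^ (γ-1) * (|rr1 γ (y*s)| * s)
        ≤ (1-s) ^ (γ-1) * ((3008 * cc γ * (x/2) ^ (2*γ-2) * s ^ (2*γ-2)) * s) := by
          refine mul_le_mul_of_nonneg_left (mul_le_mul_of_nonneg_right hb2 hs.1.le) h1s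
      _ = (3008 * cc γ * (x/2) ^ (2*γ-2)) * ((s ^ (2*γ-2) * s) * (1-s) ^ (γ-1)) := by ring
      _ = (3008 * cc γ * (x/2) ^ (2*γ-2)) * (s ^ (2*γ-1) * (1-s) ^ (γ-1)) := by rw [e1]
  · exact (betaIntegrable (p := 2*γ) (q := γ) (by linarith) (by linarith)).const_mul _
  · -- differentiability
    refine Filter.Eventually.of_forall fun s hs y hy => ?_
    rw [uIoc_of_le zero_le_one] at hs
    obtain ⟨hyIoc, _⟩ := hball y hy
    have hys : y * s ∈ Ioo (0:ℝ) 1 :=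
      mapsTo_mul hyIoc.1 (lt_of_le_of_lt (hyIoc.2.trans hδle) (by norm_num)) hs
    have hinner : HasDerivAt (fun y => rr γ (y*s)) (rr1 γ (y*s) * s) y := by
      have := (hasDerivAt_rr hγ0 hγ1 hys).comp y (hasDerivAt_mul_const (x := y) s)
      exact this
    exact hinner.const_mul _

lemma gg1_bound (hγ0 : 1 / 2 < γ) (hγ1 : γ < 1) (hx : x ∈ Ioc (0:ℝ) (deltaγ γ)) :
    |gg1 γ x| ≤ 3008 * cc γ * B2const γ * x ^ (2*γ-2) := by
  have hcc := cc_pos hγ0 hγ1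
  have hbound : ∀ᵐ s ∂(volume.restrict (Ι (0:ℝ) 1)),
      ‖(1-s) ^ (γ-1) * (rr1 γ (x*s) * s)‖
        ≤ (3008 * cc γ * x ^ (2*γ-2)) * (s ^ (2*γ-1) * (1-s) ^ (γ-1)) := by
    rw [ae_restrict_iff' measurableSet_uIoc]
    refine Filter.Eventually.of_forall fun s hs => ?_
    rw [uIoc_of_le zero_le_one] at hs
    have h1s : (0:ℝ) ≤ (1-s) ^ (γ-1) := Real.rpow_nonneg (by linarith [hs.2]) _
    have hb := rr1_bound' hγ0 hγ1 hx hs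
    have e1 : s ^ (2*γ-2) * s = s ^ (2*γ-1) := by
      nth_rewrite 2 [← Real.rpow_one s]
      rw [← Real.rpow_add hs.1]
      congr 1
      ring
    rw [Real.norm_eq_abs, abs_mul, abs_of_nonneg h1s, abs_mul, abs_of_nonneg hs.1.le]
    calc (1-s) ^ (γ-1) * (|rr1 γ (x*s)| * s)
        ≤ (1-s) ^ (γ-1) * ((3008 * cc γ * x ^ (2*γ-2) * s ^ (2*γ-2)) * s) :=
          mul_le_mul_of_nonneg_left (mul_le_mul_of_nonneg_right hb hs.1.le) h1s
      _ = (3008 * cc γ * x ^ (2*γ-2)) * ((s ^ (2*γ-2) * s) * (1-s) ^ (γ-1)) := by ring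
      _ = (3008 * cc γ * x ^ (2*γ-2)) * (s ^ (2*γ-1) * (1-s) ^ (γ-1)) := by rw [e1]
  have h := intervalIntegral.norm_integral_le_abs_of_norm_le hbound
    (((betaIntegrable (p := 2*γ) (q := γ) (by linarith) (by linarith)).const_mul
      (3008 * cc γ * x ^ (2*γ-2))))
  rw [Real.norm_eq_abs] at h
  refine h.trans ?_
  rw [intervalIntegral.integral_const_mul]
  have hB : ∫ s in (0:ℝ)..1, s ^ (2*γ-1) * (1-s) ^ (γ-1) = B2const γ := rfl
  have hBn := B2const_nonneg hγ0 hγ1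
  have hxp : (0:ℝ) ≤ x ^ (2*γ-2) := Real.rpow_nonneg hx.1.le _
  rw [hB, abs_of_nonneg (mul_nonneg (mul_nonneg (mul_nonneg (by norm_num) hcc.le) hxp) hBn)]
  exact le_of_eq (by ring)

lemma deriv_HDist (hγ0 : 1 / 2 < γ) (hγ1 : γ < 1)
    (hx : x ∈ Ioo (0:ℝ) (2/3 * deltaγ γ)) :
    deriv (HDist γ) x = cc γ * γ * Bconst γ * ((2*γ-1) * x ^ (2*γ-2))
      + (γ * x ^ (γ-1) * gg γ x + x ^ γ * gg1 γ x) := by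
  obtain ⟨hx0, hx23⟩ := hx
  have hδ := delta_pos hγ0
  have hφ : HasDerivAt (fun y => cc γ * γ * Bconst γ * y ^ (2*γ-1) + y ^ γ * gg γ y)
      (cc γ * γ * Bconst γ * ((2*γ-1) * x ^ (2*γ-2))
        + (γ * x ^ (γ-1) * gg γ x + x ^ γ * gg1 γ x)) x := by
    have h1 : HasDerivAt (fun y : ℝ => cc γ * γ * Bconst γ * y ^ (2*γ-1))
        (cc γ * γ * Bconst γ * ((2*γ-1) * x ^ (2*γ-1-1))) x :=
      (hd_rpow (2*γ-1) hx0).const_mul _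
    rw [show (2*γ-1-1) = 2*γ-2 by ring] at h1
    have h2 : HasDerivAt (fun y : ℝ => y ^ γ * gg γ y)
        (γ * x ^ (γ-1) * gg γ x + x ^ γ * gg1 γ x) x :=
      (hd_rpow γ hx0).mul (hasDerivAt_gg hγ0 hγ1 ⟨hx0, hx23⟩)
    exact h1.add h2
  have heq : HDist γ =ᶠ[nhds x] fun y => cc γ * γ * Bconst γ * y ^ (2*γ-1) + y ^ γ * gg γ y := by
    have hmem : Ioo (0:ℝ) (deltaγ γ) ∈ nhds x := isOpen_Ioo.mem_nhds ⟨hx0, by linarith⟩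
    filter_upwards [hmem] with y hy
    exact HDist_rep hγ0 hγ1 hy
  exact (hφ.congr_of_eventuallyEq heq).deriv

end Main

end YY

theorem deriv_HDist_asymp (γ : ℝ) (hγ0 : 1 / 2 < γ) (hγ1 : γ < 1) :
    Filter.Tendsto
      (fun x : ℝ => deriv (HDist γ) x /
        ((Real.sin (γ * Real.pi) / Real.pi) *
          (Real.Gamma (γ + 1) ^ 2 / Real.Gamma (2 * γ)) *
          ((2 * γ - 1) / (1 - γ)) * x ^ (2 * γ - 2)))
      (nhdsWithin 0 (Set.Ioi 0)) (nhds 1) := by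
  have hγp : (0:ℝ) < γ := by linarith
  have hsin := YY.sin_pos' hγ0 hγ1
  have hπ := Real.pi_pos
  have hG1 : 0 < Real.Gamma (γ+1) := Real.Gamma_pos_of_pos (by linarith)
  have hG2 : 0 < Real.Gamma (2*γ) := Real.Gamma_pos_of_pos (by linarith)
  have hcc := YY.cc_pos hγ0 hγ1
  have hBn := YY.B2const_nonneg hγ0 hγ1
  set K := (Real.sin (γ * Real.pi) / Real.pi) *
      (Real.Gamma (γ + 1) ^ 2 / Real.Gamma (2 * γ)) * ((2 * γ - 1) / (1 - γ)) with hK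
  have hKpos : 0 < K :=
    mul_pos (mul_pos (div_pos hsin hπ) (div_pos (pow_pos hG1 2) hG2))
      (div_pos (by linarith) (by linarith))
  have hKeq : YY.cc γ * γ * YY.Bconst γ * (2*γ-1) = K := by
    rw [hK]
    unfold YY.cc YY.Bconst
    rw [Real.Gamma_add_one hγp.ne']
    field_simp
  have hδ := YY.delta_pos (γ := γ) hγ0
  set M := (84*γ + 3008) * YY.cc γ * YY.B2const γ / K with hM
  have hEbound : ∀ᶠ x in nhdsWithin (0:ℝ) (Set.Ioi 0),
      ‖deriv (HDist γ) x / (K * x ^ (2*γ-2)) - 1‖ ≤ M * x ^ γ := by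
    filter_upwards [Ioo_mem_nhdsGT_of_mem
      (show (0:ℝ) ∈ Ico (0:ℝ) (2/3 * YY.deltaγ γ) from ⟨le_refl _, by linarith⟩)] with x hx
    obtain ⟨hx0, hx23⟩ := hx
    have hxIoc : x ∈ Ioc (0:ℝ) (YY.deltaγ γ) := ⟨hx0, by linarith⟩
    have hd := YY.deriv_HDist hγ0 hγ1 ⟨hx0, hx23⟩
    have hgb := YY.gg_bound hγ0 hγ1 hxIoc
    have hg1b := YY.gg1_bound hγ0 hγ1 hxIoc
    have hx2 : (0:ℝ) < x ^ (2*γ-2) := Real.rpow_pos_of_pos hx0 _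
    have hxg : (0:ℝ) < x ^ γ := Real.rpow_pos_of_pos hx0 _
    have hxg1 : (0:ℝ) < x ^ (γ-1) := Real.rpow_pos_of_pos hx0 _
    have hx21 : (0:ℝ) < x ^ (2*γ-1) := Real.rpow_pos_of_pos hx0 _
    set R := γ * x ^ (γ-1) * YY.gg γ x + x ^ γ * YY.gg1 γ x with hR
    have hratio : deriv (HDist γ) x / (K * x ^ (2*γ-2)) - 1 = R / (K * x ^ (2*γ-2)) := by
      rw [hd, show YY.cc γ * γ * YY.Bconst γ * ((2*γ-1) * x ^ (2*γ-2))
        = (YY.cc γ * γ * YY.Bconst γ * (2*γ-1)) * x ^ (2*γ-2) by ring, hKeq]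
      field_simp
      ring
    have e7 : x ^ (γ-1) * x ^ (2*γ-1) = x ^ γ * x ^ (2*γ-2) := by
      rw [← Real.rpow_add hx0, ← Real.rpow_add hx0]
      congr 1
      ring
    have hRb : |R| ≤ (84*γ + 3008) * YY.cc γ * YY.B2const γ * (x ^ γ * x ^ (2*γ-2)) := by
      refine (abs_add_le _ _).trans ?_
      have h1 : |γ * x ^ (γ-1) * YY.gg γ x| ≤ γ * x ^ (γ-1) * (84 * YY.cc γ * YY.B2const γ
          * x ^ (2*γ-1)) := by
        rw [abs_mul, abs_of_nonneg (by positivity : (0:ℝ) ≤ γ * x ^ (γ-1))]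
        exact mul_le_mul_of_nonneg_left hgb (by positivity)
      have h2 : |x ^ γ * YY.gg1 γ x| ≤ x ^ γ * (3008 * YY.cc γ * YY.B2const γ
          * x ^ (2*γ-2)) := by
        rw [abs_mul, abs_of_nonneg hxg.le]
        exact mul_le_mul_of_nonneg_left hg1b hxg.le
      have e8 : γ * x ^ (γ-1) * (84 * YY.cc γ * YY.B2const γ * x ^ (2*γ-1))
          = 84 * γ * YY.cc γ * YY.B2const γ * (x ^ (γ-1) * x ^ (2*γ-1)) := by ring
      rw [e8, e7] at h1
      nlinarith [h1, h2, mul_nonneg (mul_nonneg hcc.le hBn)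
        (mul_nonneg hxg.le hx2.le)]
    have habs : ‖deriv (HDist γ) x / (K * x ^ (2*γ-2)) - 1‖
        = |R| / (K * x ^ (2*γ-2)) := by
      rw [hratio, Real.norm_eq_abs, abs_div,
        abs_of_nonneg (by positivity : (0:ℝ) ≤ K * x ^ (2*γ-2))]
    rw [habs]
    have hstep : |R| / (K * x ^ (2*γ-2))
        ≤ ((84*γ + 3008) * YY.cc γ * YY.B2const γ * (x ^ γ * x ^ (2*γ-2)))
          / (K * x ^ (2*γ-2)) := by
      gcongr
    refine hstep.trans (le_of_eq ?_)
    rw [hM]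
    field_simp
  have hx0lim : Filter.Tendsto (fun x : ℝ => M * x ^ γ)
      (nhdsWithin (0:ℝ) (Set.Ioi 0)) (nhds 0) := by
    have h0 : Filter.Tendsto (fun x : ℝ => x ^ γ) (nhds 0) (nhds 0) := by
      have := (Real.continuousAt_rpow_const 0 γ (Or.inr hγp.le)).tendsto
      rwa [Real.zero_rpow hγp.ne'] at this
    have h1 := (h0.mono_left (nhdsWithin_le_nhds (s := Set.Ioi (0:ℝ)))).const_mul M
    simpa using h1
  have hsq := squeeze_zero_norm' hEbound hx0lim
  have hfinal := hsq.add_const 1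
  rw [zero_add] at hfinal
  refine hfinal.congr fun x => ?_
  ring
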